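/- arXiv:2402.18917 — 3 statements merged into one kernel-verified Lean document; each statement's English description precedes it below -/
import Mathlib

section
/- Monotonicity of optimal assortment revenue: if θ, θ' ∈ ℝ_{>0}^K satisfy θ'_i ≥ θ_i for all i, and r_i ∈ [0,1] are weights, then max over subsets S ⊆ [K] with |S| ≤ m of R(S,θ) ≤ max over the same subsets of R(S,θ'), where R(S,θ) = (∑_{i∈S} r_i θ_i)/(θ_0 + ∑_{i∈S} θ_i) with θ_0 > 0 fixed. -/
/-- One-step algebraic lemma: raising a single weight `t ≤ t'` either raises
the ratio or dropping the item does. -/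
lemma onestep (A B r t t' : ℝ) (hA : 0 ≤ A) (hB : 0 < B) (hr : 0 ≤ r)
    (ht : 0 < t) (htt : t ≤ t') :
    (A + r * t) / (B + t) ≤ max ((A + r * t') / (B + t')) (A / B) := by
  have ht' : 0 < t' := lt_of_lt_of_le ht htt
  have hBt : 0 < B + t := by linarith
  have hBt' : 0 < B + t' := by linarith
  rcases le_total A (r * B) with h | h
  · refine le_max_of_le_left ?_
    rw [div_le_div_iff₀ hBt hBt']
    nlinarith
  · refine le_max_of_le_right ?_
    rw [div_le_div_iff₀ hBt hB]
    nlinarith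

/-- Key lemma: gradually replacing `θ` by `θ'` (coordinates outside `T`
already replaced), for any assortment `S` there is a sub-assortment `S' ⊆ S`
whose revenue under `θ'` is at least that of `S` under `θ`. -/
lemma key (K : ℕ) (θ0 : ℝ) (hθ0 : 0 < θ0) (θ' r : Fin K → ℝ)
    (hθ' : ∀ i, 0 < θ' i) (hr0 : ∀ i, 0 ≤ r i) :
    ∀ (T : Finset (Fin K)) (θ : Fin K → ℝ), (∀ i, 0 < θ i) →
      (∀ i, θ i ≤ θ' i) → (∀ i ∉ T, θ i = θ' i) →
      ∀ S : Finset (Fin K), ∃ S' ⊆ S,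
        (∑ i ∈ S, r i * θ i) / (θ0 + ∑ i ∈ S, θ i) ≤
          (∑ i ∈ S', r i * θ' i) / (θ0 + ∑ i ∈ S', θ' i) := by
  intro T
  induction T using Finset.induction_on with
  | empty =>
      intro θ hpos hle hout S
      refine ⟨S, le_refl S, le_of_eq ?_⟩
      have h : ∀ i ∈ S, θ i = θ' i := fun i _ => hout i (Finset.notMem_empty i)
      have h1 : (∑ i ∈ S, r i * θ i) = ∑ i ∈ S, r i * θ' i :=
        Finset.sum_congr rfl fun i hi => by rw [h i hi]
      have h2 : (∑ i ∈ S, θ i) = ∑ i ∈ S, θ' i :=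
        Finset.sum_congr rfl fun i hi => by rw [h i hi]
      rw [h1, h2]
  | @insert a T ha IH =>
      intro θ hpos hle hout S
      set θ₁ : Fin K → ℝ := Function.update θ a (θ' a) with hθ₁
      have hpos₁ : ∀ i, 0 < θ₁ i := by
        intro i
        by_cases hia : i = a
        · simp [hθ₁, hia, hθ' a]
        · simp [hθ₁, Function.update_of_ne hia, hpos i]
      have hle₁ : ∀ i, θ₁ i ≤ θ' i := by
        intro i
        by_cases hia : i = a
        · simp [hθ₁, hia]
        · simp [hθ₁, Function.update_of_ne hia, hle i]
      have hout₁ : ∀ i ∉ T, θ₁ i = θ' i := by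
        intro i hi
        by_cases hia : i = a
        · simp [hθ₁, hia]
        · rw [hθ₁, Function.update_of_ne hia]
          exact hout i (by simp [hia, hi])
      by_cases haS : a ∈ S
      · -- split off the element a
        set A : ℝ := ∑ i ∈ S.erase a, r i * θ i with hA
        set B : ℝ := θ0 + ∑ i ∈ S.erase a, θ i with hB
        have hAnn : 0 ≤ A :=
          Finset.sum_nonneg fun i _ => mul_nonneg (hr0 i) (hpos i).le
        have hBpos : 0 < B := by
          have : 0 ≤ ∑ i ∈ S.erase a, θ i :=
            Finset.sum_nonneg fun i _ => (hpos i).le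
          rw [hB]; linarith
        have hsame : ∀ i ∈ S.erase a, θ₁ i = θ i := by
          intro i hi
          have : i ≠ a := Finset.ne_of_mem_erase hi
          simp [hθ₁, Function.update_of_ne this]
        have hA₁ : (∑ i ∈ S.erase a, r i * θ₁ i) = A :=
          Finset.sum_congr rfl fun i hi => by rw [hsame i hi]
        have hB₁ : θ0 + ∑ i ∈ S.erase a, θ₁ i = B := by
          rw [hB]
          congr 1
          exact Finset.sum_congr rfl fun i hi => by rw [hsame i hi]
        have hSsum : (∑ i ∈ S, r i * θ i) = A + r a * θ a := by
          have h := Finset.sum_erase_add S (fun i => r i * θ i) haS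
          beta_reduce at h
          rw [hA]; linarith
        have hSsum' : θ0 + ∑ i ∈ S, θ i = B + θ a := by
          rw [hB]
          have := Finset.sum_erase_add S θ haS
          linarith [this]
        have hSsum₁ : (∑ i ∈ S, r i * θ₁ i) = A + r a * θ' a := by
          have h1 := Finset.sum_erase_add S (fun i => r i * θ₁ i) haS
          have h2 : θ₁ a = θ' a := by simp [hθ₁]
          simp only [h2] at h1
          linarith [hA₁, h1]
        have hSsum₁' : θ0 + ∑ i ∈ S, θ₁ i = B + θ' a := by
          have h1 := Finset.sum_erase_add S θ₁ haS
          have h2 : θ₁ a = θ' a := by simp [hθ₁]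
          rw [h2] at h1
          linarith [hB₁, h1]
        have hmax := onestep A B (r a) (θ a) (θ' a) hAnn hBpos (hr0 a)
          (hpos a) (hle a)
        rcases max_cases ((A + r a * θ' a) / (B + θ' a)) (A / B) with
          ⟨heq, _⟩ | ⟨heq, _⟩
        · -- keep a : revenue of S under θ₁ is at least that under θ
          obtain ⟨S', hS'sub, hS'⟩ := IH θ₁ hpos₁ hle₁ hout₁ S
          refine ⟨S', hS'sub, ?_⟩
          calc (∑ i ∈ S, r i * θ i) / (θ0 + ∑ i ∈ S, θ i)
              ≤ (A + r a * θ' a) / (B + θ' a) := by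
                rw [hSsum, hSsum']; rw [heq] at hmax; exact hmax
            _ = (∑ i ∈ S, r i * θ₁ i) / (θ0 + ∑ i ∈ S, θ₁ i) := by
                rw [hSsum₁, hSsum₁']
            _ ≤ _ := hS'
        · -- drop a
          obtain ⟨S', hS'sub, hS'⟩ := IH θ₁ hpos₁ hle₁ hout₁ (S.erase a)
          refine ⟨S', hS'sub.trans (Finset.erase_subset a S), ?_⟩
          calc (∑ i ∈ S, r i * θ i) / (θ0 + ∑ i ∈ S, θ i)
              ≤ A / B := by
                rw [hSsum, hSsum']; rw [heq] at hmax; exact hmax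
            _ = (∑ i ∈ S.erase a, r i * θ₁ i) /
                  (θ0 + ∑ i ∈ S.erase a, θ₁ i) := by rw [hA₁, hB₁]
            _ ≤ _ := hS'
      · -- a ∉ S : sums over S unchanged
        obtain ⟨S', hS'sub, hS'⟩ := IH θ₁ hpos₁ hle₁ hout₁ S
        refine ⟨S', hS'sub, ?_⟩
        have h1 : (∑ i ∈ S, r i * θ i) = ∑ i ∈ S, r i * θ₁ i :=
          Finset.sum_congr rfl fun i hi => by
            have : i ≠ a := fun h => haS (h ▸ hi)
            simp [hθ₁, Function.update_of_ne this]
        have h2 : (∑ i ∈ S, θ i) = ∑ i ∈ S, θ₁ i :=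
          Finset.sum_congr rfl fun i hi => by
            have : i ≠ a := fun h => haS (h ▸ hi)
            simp [hθ₁, Function.update_of_ne this]
        rw [h1, h2]
        exact hS'

/-- Monotonicity of the optimal assortment revenue in the PL parameters:
if `θ' ≥ θ` componentwise, the best revenue over assortments of size at most
`m` under `θ` is at most that under `θ'`. -/
theorem optimal_revenue_mono (K m : ℕ) (θ0 : ℝ) (hθ0 : 0 < θ0)
    (θ θ' : Fin K → ℝ) (r : Fin K → ℝ)
    (hθ : ∀ i, 0 < θ i) (hθ' : ∀ i, 0 < θ' i) (hle : ∀ i, θ i ≤ θ' i)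
    (hr : ∀ i, r i ∈ Set.Icc (0:ℝ) 1) :
    sSup {x : ℝ | ∃ S : Finset (Fin K), S.card ≤ m ∧
        x = (∑ i ∈ S, r i * θ i) / (θ0 + ∑ i ∈ S, θ i)} ≤
      sSup {x : ℝ | ∃ S : Finset (Fin K), S.card ≤ m ∧
        x = (∑ i ∈ S, r i * θ' i) / (θ0 + ∑ i ∈ S, θ' i)} := by
  set B := {x : ℝ | ∃ S : Finset (Fin K), S.card ≤ m ∧
      x = (∑ i ∈ S, r i * θ' i) / (θ0 + ∑ i ∈ S, θ' i)} with hBdef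
  have hr0 : ∀ i, 0 ≤ r i := fun i => (hr i).1
  have hr1 : ∀ i, r i ≤ 1 := fun i => (hr i).2
  -- every element of B is between 0 and 1
  have hBdd : ∀ x ∈ B, x ≤ 1 := by
    rintro x ⟨S, _, rfl⟩
    have hden : 0 < θ0 + ∑ i ∈ S, θ' i := by
      have : 0 ≤ ∑ i ∈ S, θ' i := Finset.sum_nonneg fun i _ => (hθ' i).le
      linarith
    rw [div_le_one hden]
    have : (∑ i ∈ S, r i * θ' i) ≤ ∑ i ∈ S, θ' i :=
      Finset.sum_le_sum fun i _ => by nlinarith [hr0 i, hr1 i, (hθ' i).le]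
    linarith
  have hBbdd : BddAbove B := ⟨1, hBdd⟩
  have h0B : (0:ℝ) ∈ B := ⟨∅, by simp, by simp⟩
  have hBne : B.Nonempty := ⟨0, h0B⟩
  have hsup0 : (0:ℝ) ≤ sSup B := le_csSup hBbdd h0B
  refine Real.sSup_le ?_ hsup0
  rintro x ⟨S, hcard, rfl⟩
  obtain ⟨S', hS'sub, hS'⟩ := key K θ0 hθ0 θ' r hθ' hr0 Finset.univ θ hθ hle
    (fun i hi => absurd (Finset.mem_univ i) hi) S
  have hcard' : S'.card ≤ m := (Finset.card_le_card hS'sub).trans hcard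
  have hmem : (∑ i ∈ S', r i * θ' i) / (θ0 + ∑ i ∈ S', θ' i) ∈ B :=
    ⟨S', hcard', rfl⟩
  exact hS'.trans (le_csSup hBbdd hmem)
end

section
/- With θ_0 = 1, θ_i > 0, x > 0, and n ≥ 69x(1+θ_i), setting Δ = 2√(2θ_i x/((1+θ_i)² n)) + 11x/n, one has (1+θ_i)Δ ≤ 1/2, and hence θ^ucb − θ_i ≤ 4(1+θ_i)√(2θ_i x/n) + 22x(1+θ_i)²/n, where θ^ucb = (p+Δ)/(1−p−Δ) and p = θ_i/(1+θ_i). -/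
/-- Deterministic arithmetic behind the confidence bound on the PL parameter:
with `θ₀ = 1`, `n ≥ 69 x (1 + θᵢ)` and
`Δ = 2 √(2 θᵢ x / ((1+θᵢ)² n)) + 11 x / n`, one has `(1+θᵢ) Δ ≤ 1/2` and
`θᵘᶜᵇ - θᵢ ≤ 4 (1+θᵢ) √(2 θᵢ x / n) + 22 x (1+θᵢ)² / n`, where
`θᵘᶜᵇ = (p+Δ)/(1-p-Δ)` and `p = θᵢ/(1+θᵢ)`. -/
theorem theta_ucb_bound (θi x n p Δ : ℝ) (hθi : 0 < θi) (hx : 0 < x)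
    (hn : 0 < n) (hn' : 69 * x * (1 + θi) ≤ n)
    (hp : p = θi / (1 + θi))
    (hΔ : Δ = 2 * Real.sqrt (2 * θi * x / ((1 + θi) ^ 2 * n)) + 11 * x / n) :
    (1 + θi) * Δ ≤ 1 / 2 ∧
      (p + Δ) / (1 - (p + Δ)) - θi ≤
        4 * (1 + θi) * Real.sqrt (2 * θi * x / n) +
          22 * x * (1 + θi) ^ 2 / n := by
  have ha : (0:ℝ) < 1 + θi := by linarith
  have hane : (1 + θi) ≠ 0 := ne_of_gt ha
  have hs0 : 0 ≤ 2 * θi * x / n := by positivity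
  set s := Real.sqrt (2 * θi * x / n) with hs
  have hs_nonneg : 0 ≤ s := Real.sqrt_nonneg _
  have hsqrt : Real.sqrt (2 * θi * x / ((1 + θi) ^ 2 * n)) = s / (1 + θi) := by
    rw [show 2 * θi * x / ((1 + θi) ^ 2 * n) = (2 * θi * x / n) / (1 + θi) ^ 2 by
      field_simp]
    rw [Real.sqrt_div hs0, Real.sqrt_sq ha.le]
  have hΔ' : Δ = 2 * s / (1 + θi) + 11 * x / n := by rw [hΔ, hsqrt]; ring
  have hΔpos : 0 < Δ := by
    rw [hΔ']
    have : 0 < 11 * x / n := by positivity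
    have : 0 ≤ 2 * s / (1 + θi) := by positivity
    linarith
  have hsle : s ≤ 47 / 276 := by
    have h1 : 2 * θi * x / n ≤ (47 / 276) ^ 2 := by
      rw [div_le_iff₀ hn]
      nlinarith [mul_pos hx hθi, mul_pos hx ha]
    calc s ≤ Real.sqrt ((47 / 276) ^ 2) := Real.sqrt_le_sqrt h1
      _ = 47 / 276 := Real.sqrt_sq (by norm_num)
  have hxan : x * (1 + θi) / n ≤ 1 / 69 := by
    rw [div_le_iff₀ hn]; linarith
  have hADform : (1 + θi) * Δ = 2 * s + 11 * (x * (1 + θi) / n) := by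
    rw [hΔ']; field_simp
  have part1 : (1 + θi) * Δ ≤ 1 / 2 := by
    rw [hADform]; linarith
  refine ⟨part1, ?_⟩
  have hden : (0:ℝ) < 1 - (1 + θi) * Δ := by linarith
  have hDpos : 0 < 1 - (p + Δ) := by
    rw [hp]
    have : 1 - (θi / (1 + θi) + Δ) = (1 - (1 + θi) * Δ) / (1 + θi) := by
      field_simp; ring
    rw [this]
    positivity
  have hD2 : 1 - (θi / (1 + θi) + Δ) = (1 - (1 + θi) * Δ) / (1 + θi) := by
    field_simp
    ring
  have hkey : (p + Δ) / (1 - (p + Δ)) - θi = (1 + θi) ^ 2 * Δ / (1 - (1 + θi) * Δ) := by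
    rw [hp, hD2, div_div_eq_mul_div, sub_eq_iff_eq_add,
      div_add' _ _ _ (ne_of_gt hden), div_eq_div_iff (ne_of_gt hden) (ne_of_gt hden)]
    field_simp
    ring
  have h2 : (1 + θi) ^ 2 * Δ / (1 - (1 + θi) * Δ) ≤ 2 * ((1 + θi) ^ 2 * Δ) := by
    rw [div_le_iff₀ hden]
    nlinarith [mul_nonneg (sq_nonneg (1 + θi)) hΔpos.le]
  have h3 : 2 * ((1 + θi) ^ 2 * Δ) =
      4 * (1 + θi) * s + 22 * x * (1 + θi) ^ 2 / n := by
    rw [hΔ']; field_simp; ring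
  rw [hkey]
  linarith [h2, h3.le]
end

section
/- If for all i, θ^ucb_i ≥ θ_i ≥ 0 and r_i ∈ [0,1], θ_0 > 0, then for any subset S, R(S, θ^ucb) − R(S, θ) ≤ ∑_{i∈S} (θ^ucb_i − θ_i)/(θ_0 + ∑_{j∈S} θ_j), where R(S,θ) = ∑_{i∈S} r_i θ_i/(θ_0 + ∑_{j∈S} θ_j). -/
/-- If `θᵘᶜᵇ ≥ θ ≥ 0` componentwise and `r ∈ [0,1]`, then
`R(S, θᵘᶜᵇ) - R(S, θ) ≤ ∑_{i∈S} (θᵘᶜᵇᵢ - θᵢ)/(θ₀ + ∑_{j∈S} θⱼ)`. -/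
theorem revenue_diff_bound (K : ℕ) (θ0 : ℝ) (hθ0 : 0 < θ0)
    (θ θucb r : Fin K → ℝ) (hθ : ∀ i, 0 ≤ θ i)
    (hucb : ∀ i, θ i ≤ θucb i) (hr : ∀ i, r i ∈ Set.Icc (0:ℝ) 1)
    (S : Finset (Fin K)) :
    (∑ i ∈ S, r i * θucb i) / (θ0 + ∑ j ∈ S, θucb j) -
        (∑ i ∈ S, r i * θ i) / (θ0 + ∑ j ∈ S, θ j) ≤
      ∑ i ∈ S, (θucb i - θ i) / (θ0 + ∑ j ∈ S, θ j) := by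
  have hT : 0 < θ0 + ∑ j ∈ S, θ j := by
    have : 0 ≤ ∑ j ∈ S, θ j := Finset.sum_nonneg fun j _ => hθ j
    linarith
  have hTu : θ0 + ∑ j ∈ S, θ j ≤ θ0 + ∑ j ∈ S, θucb j := by
    have := Finset.sum_le_sum fun j (_ : j ∈ S) => hucb j
    linarith
  have hA : 0 ≤ ∑ i ∈ S, r i * θucb i :=
    Finset.sum_nonneg fun i _ => mul_nonneg (hr i).1 (le_trans (hθ i) (hucb i))
  have h1 : (∑ i ∈ S, r i * θucb i) / (θ0 + ∑ j ∈ S, θucb j) ≤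
      (∑ i ∈ S, r i * θucb i) / (θ0 + ∑ j ∈ S, θ j) :=
    div_le_div_of_nonneg_left hA hT hTu |>.trans_eq rfl
  have h2 : (∑ i ∈ S, r i * θucb i) - (∑ i ∈ S, r i * θ i) ≤
      ∑ i ∈ S, (θucb i - θ i) := by
    rw [← Finset.sum_sub_distrib]
    refine Finset.sum_le_sum fun i _ => ?_
    have h := hr i
    nlinarith [hucb i, h.1, h.2]
  rw [← Finset.sum_div]
  have h3 : ((∑ i ∈ S, r i * θucb i) - (∑ i ∈ S, r i * θ i)) / (θ0 + ∑ j ∈ S, θ j) ≤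
      (∑ i ∈ S, (θucb i - θ i)) / (θ0 + ∑ j ∈ S, θ j) :=
    div_le_div_of_nonneg_right h2 hT.le |>.trans_eq rfl
  calc (∑ i ∈ S, r i * θucb i) / (θ0 + ∑ j ∈ S, θucb j) -
        (∑ i ∈ S, r i * θ i) / (θ0 + ∑ j ∈ S, θ j)
      ≤ (∑ i ∈ S, r i * θucb i) / (θ0 + ∑ j ∈ S, θ j) -
        (∑ i ∈ S, r i * θ i) / (θ0 + ∑ j ∈ S, θ j) := by linarith
    _ = ((∑ i ∈ S, r i * θucb i) - (∑ i ∈ S, r i * θ i)) / (θ0 + ∑ j ∈ S, θ j) := by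
        rw [div_sub_div_same]
    _ ≤ _ := h3
end
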